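/- arXiv:1908.01160 — 3 statements merged into one kernel-verified Lean document; each statement's English description precedes it below -/
import Mathlib

section
/- Let Q be a finite p-group and let P be a finite p-group acting faithfully on a finite set Δ with ℓ orbits. Then the minimal number of generators of the wreath product Q wr_Δ P equals d(P) + ℓ · d(Q). -/
/-- The action of `P` on the base group `Δ → Q` of the wreath product,
permuting coordinates: `(σ • f) δ = f (σ⁻¹ • δ)`. -/
def wreathMulAut (Q : Type*) (Δ : Type*) (P : Type*) [Group Q] [Group P] [MulAction P Δ] :
    P →* MulAut (Δ → Q) where
  toFun σ := MulEquiv.arrowCongr (MulAction.toPerm σ) (MulEquiv.refl Q)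
  map_one' := by
    ext f δ
    simp [MulEquiv.arrowCongr]
  map_mul' σ τ := by
    ext f δ
    simp [MulEquiv.arrowCongr, mul_smul]

/-- The wreath product `Q wr_Δ P`, with base group `Δ → Q` and top group `P`. -/
abbrev WreathProduct (Q Δ P : Type*) [Group Q] [Group P] [MulAction P Δ] :=
  SemidirectProduct (Δ → Q) P (wreathMulAut Q Δ P)

instance (Q Δ P : Type*) [Group Q] [Group P] [MulAction P Δ] [Finite Q] [Finite Δ]
    [Finite P] : Finite (WreathProduct Q Δ P) :=
  Finite.of_injective (fun w => (w.left, w.right)) fun a b h => by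
    cases a; cases b
    simpa [SemidirectProduct.ext_iff, Prod.ext_iff] using h

/-!
The generators of `P`, together with the generators of `Q` placed at one point of each `P`-orbit,
generate `Q wr_Δ P`: conjugation by `P` moves that point around its orbit, and the `mulSingle`s
generate the base group. Conversely, multiplying the coordinates over each orbit maps
`Q wr_Δ P` onto the elementary abelian group `(Q/Φ(Q))^ℓ × P/Φ(P)`. By the Burnside basis theorem
`|G/Φ(G)| = p^d(G)` for a finite `p`-group `G`, and an elementary abelian group of order `p^n`
needs `n` generators, so `d(Q wr_Δ P) ≥ ℓ·d(Q) + d(P)`.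
-/

open Subgroup

namespace Group

variable {G : Type*} [Group G]

theorem exists_finset_card_le_closure_sup_eq_top [FG G] (N : Subgroup G) [N.Normal] :
    ∃ T : Finset G, T.card ≤ rank (G ⧸ N) ∧ closure (T : Set G) ⊔ N = ⊤ := by
  classical
  obtain ⟨S, hS, hSgen⟩ := rank_spec (G ⧸ N)
  refine ⟨S.image Quotient.out, hS ▸ Finset.card_image_le, ?_⟩
  rw [sup_comm, ← QuotientGroup.comap_map_mk', MonoidHom.map_closure, Finset.coe_image,
    ← Set.image_comp]
  simp [Function.comp_def, hSgen]

theorem rank_le_rank_quotient_add_rank [FG G] (N : Subgroup G) [N.Normal] [FG N] :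
    rank G ≤ rank (G ⧸ N) + rank N := by
  classical
  obtain ⟨T, hT, hTgen⟩ := exists_finset_card_le_closure_sup_eq_top N
  obtain ⟨U, hU, hUgen⟩ := rank_spec N
  have hN : closure ((U.image N.subtype : Finset G) : Set G) = N := by
    rw [Finset.coe_image, ← MonoidHom.map_closure, hUgen, ← MonoidHom.range_eq_map,
      range_subtype]
  calc rank G ≤ (T ∪ U.image N.subtype).card :=
        rank_le (by rw [Finset.coe_union, Subgroup.closure_union, hN, hTgen])
    _ ≤ T.card + U.card :=
        (Finset.card_union_le _ _).trans (Nat.add_le_add_left Finset.card_image_le _)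
    _ ≤ rank (G ⧸ N) + rank N := by omega

theorem rank_quotient_eq_of_le_frattini [FG G] [IsCoatomic (Subgroup G)] {N : Subgroup G}
    [N.Normal] (hN : N ≤ frattini G) : rank (G ⧸ N) = rank G := by
  refine le_antisymm (rank_le_of_surjective _ (QuotientGroup.mk'_surjective N)) ?_
  obtain ⟨T, hT, hTgen⟩ := exists_finset_card_le_closure_sup_eq_top N
  have : closure (T : Set G) = ⊤ :=
    frattini_nongenerating (top_le_iff.mp (hTgen ▸ sup_le_sup_left hN _))
  exact (rank_le this).trans hT

end Group

section ElementaryAbelian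

variable {p : ℕ} {V : Type*} [CommGroup V] [Finite V]

theorem pow_rank_le_card_of_pow_eq_one (hp : p.Prime) (hV : ∀ x : V, x ^ p = 1) :
    p ^ Group.rank V ≤ Nat.card V := by
  induction h : Nat.card V using Nat.strong_induction_on generalizing V with
  | _ n ih =>
  rcases subsingleton_or_nontrivial V with hV1 | hV1
  · simp [Group.rank_eq_zero, ← h]
  obtain ⟨x, hx⟩ := exists_ne (1 : V)
  have := Fact.mk hp
  set N := zpowers x
  have hN : Nat.card N = p := by rw [Nat.card_zpowers, orderOf_eq_prime (hV x) hx]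
  have hcard : Nat.card (V ⧸ N) * p = n := by
    rw [← hN, ← card_eq_card_quotient_mul_card_subgroup, h]
  have hrank : Group.rank V ≤ Group.rank (V ⧸ N) + 1 := by
    refine (Group.rank_le_rank_quotient_add_rank N).trans (Nat.add_le_add_left ?_ _)
    exact (rank_congr (zpowers_eq_closure x)).trans_le
      (by simpa using rank_closure_finite_le_nat_card {x})
  have hquot : ∀ y : V ⧸ N, y ^ p = 1 := by
    rintro ⟨y⟩
    exact congrArg _ (hV y)
  have := ih _ (by rw [← hcard]; exact lt_mul_right Nat.card_pos hp.one_lt) hquot rfl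
  calc p ^ Group.rank V ≤ p ^ (Group.rank (V ⧸ N) + 1) := Nat.pow_le_pow_right hp.pos hrank
    _ ≤ Nat.card (V ⧸ N) * p := by rw [pow_succ]; gcongr
    _ = n := hcard

theorem card_eq_pow_rank_of_pow_eq_one (hp : p.Prime) (hV : ∀ x : V, x ^ p = 1) :
    Nat.card V = p ^ Group.rank V :=
  (Nat.le_of_dvd (pow_pos hp.pos _) (card_dvd_exponent_pow_rank' V hV)).antisymm
    (pow_rank_le_card_of_pow_eq_one hp hV)

end ElementaryAbelian

section CommutatorPow

open scoped commutatorElement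

variable (p : ℕ) (G : Type*) [Group G]

-- `Φ(G) = [G, G] G^p`, the Frattini subgroup when `G` is a finite `p`-group.
def commutatorPow : Subgroup G :=
  commutator G ⊔ normalClosure (Set.range fun g : G => g ^ p)

instance : (commutatorPow p G).Normal := sup_normal _ _

variable {G}

theorem commutatorPow_le_iff {N : Subgroup G} [N.Normal] :
    commutatorPow p G ≤ N ↔ (∀ a b : G, ⁅a, b⁆ ∈ N) ∧ ∀ g : G, g ^ p ∈ N := by
  simp [commutatorPow, commutator_def, commutator_le, ← normalClosure_subset_iff,
    Set.range_subset_iff]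

instance : CommGroup (G ⧸ commutatorPow p G) where
  mul_comm := by
    rintro ⟨a⟩ ⟨b⟩
    refine QuotientGroup.eq.mpr ?_
    convert ((commutatorPow_le_iff p).mp le_rfl).1 b⁻¹ a⁻¹ using 1
    group

theorem pow_eq_one_of_quotient_commutatorPow (x : G ⧸ commutatorPow p G) : x ^ p = 1 := by
  induction x using QuotientGroup.induction_on with
  | H g => exact (QuotientGroup.eq_one_iff _).mpr (((commutatorPow_le_iff p).mp le_rfl).2 g)

end CommutatorPow

namespace IsPGroup

variable {p : ℕ} {G : Type*} [Group G] [Finite G]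

theorem card_eq_of_isSimpleOrder (hp : p.Prime) (hG : IsPGroup p G)
    [IsSimpleOrder (Subgroup G)] : Nat.card G = p := by
  have := Fact.mk hp
  have : Nontrivial G := Subgroup.nontrivial_iff.mp inferInstance
  obtain ⟨y, hy⟩ := exists_prime_orderOf_dvd_card' p
    (hG.card_eq_or_dvd.resolve_left Finite.one_lt_card.ne')
  have hy1 : zpowers y ≠ ⊥ :=
    zpowers_ne_bot.mpr (by rw [Ne, ← orderOf_eq_one_iff, hy]; exact hp.ne_one)
  rw [← hy, ← Nat.card_zpowers, (eq_bot_or_eq_top _).resolve_left hy1, card_top]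

theorem commutatorPow_le_of_isCoatom (hp : p.Prime) (hG : IsPGroup p G) {M : Subgroup G}
    (hM : IsCoatom M) : commutatorPow p G ≤ M := by
  have := Fact.mk hp
  have : M.Normal := NormalizerCondition.normal_of_coatom M
    (Group.normalizerCondition_of_isNilpotent (h := hG.isNilpotent)) hM
  have : IsSimpleOrder (Subgroup (G ⧸ M)) :=
    (OrderIso.isSimpleOrder_iff (β := Set.Ici M) (QuotientGroup.comapMk'OrderIso M)).mpr
      (Set.isSimpleOrder_Ici_iff_isCoatom.mpr hM)
  have hcard := (hG.to_quotient M).card_eq_of_isSimpleOrder hp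
  have : IsCyclic (G ⧸ M) := isCyclic_of_prime_card hcard
  refine (commutatorPow_le_iff p).mpr ⟨fun a b => ?_, fun g => ?_⟩
  · rw [← QuotientGroup.eq_one_iff, ← QuotientGroup.mk'_apply, map_commutatorElement,
      commutatorElement_eq_one_iff_commute]
    exact Std.Commutative.comm _ _
  · rw [← QuotientGroup.eq_one_iff, QuotientGroup.mk_pow, ← hcard, pow_card_eq_one']

theorem card_quotient_commutatorPow (hp : p.Prime) (hG : IsPGroup p G) :
    Nat.card (G ⧸ commutatorPow p G) = p ^ Group.rank G := by
  rw [card_eq_pow_rank_of_pow_eq_one hp (pow_eq_one_of_quotient_commutatorPow p),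
    Group.rank_quotient_eq_of_le_frattini
      (le_iInf₂ fun _ hM => hG.commutatorPow_le_of_isCoatom hp hM)]

end IsPGroup

section Wreath

open SemidirectProduct MulAction Function

variable {Q Δ P : Type*} [Group Q] [Group P] [MulAction P Δ]

theorem wreathMulAut_apply (σ : P) (f : Δ → Q) (δ : Δ) :
    wreathMulAut Q Δ P σ f δ = f (σ⁻¹ • δ) :=
  rfl

theorem wreathMulAut_mulSingle [DecidableEq Δ] (σ : P) (δ : Δ) (q : Q) :
    wreathMulAut Q Δ P σ (Pi.mulSingle δ q) = Pi.mulSingle (σ • δ) q := by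
  ext δ'
  simp [wreathMulAut_apply, Pi.mulSingle_apply, inv_smul_eq_iff]

namespace WreathProduct

theorem closure_eq_top [Finite Δ] [DecidableEq Δ] {S : Set P} (hS : closure S = ⊤) {T : Set Q}
    (hT : closure T = ⊤) {R : Set Δ} (hR : ∀ δ, ∃ r ∈ R, δ ∈ orbit P r) :
    closure (inr '' S ∪ Set.image2 (fun r q => inl (Pi.mulSingle r q)) R T :
      Set (WreathProduct Q Δ P)) = ⊤ := by
  set H := closure (inr '' S ∪ Set.image2 (fun r q => inl (Pi.mulSingle r q)) R T :
      Set (WreathProduct Q Δ P))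
  have hP (σ : P) : inr σ ∈ H := by
    have : closure S ≤ H.comap inr :=
      (closure_le _).mpr fun σ hσ => subset_closure (Or.inl ⟨σ, hσ, rfl⟩)
    exact this (hS ▸ mem_top σ)
  have hR' {r : Δ} (hr : r ∈ R) (q : Q) : inl (Pi.mulSingle r q) ∈ H := by
    have : closure T ≤ H.comap (inl.comp (MonoidHom.mulSingle _ r)) :=
      (closure_le _).mpr fun q hq => subset_closure (Or.inr ⟨r, hr, q, hq, rfl⟩)
    exact this (hT ▸ mem_top q)
  have hbase (f : Δ → Q) : inl f ∈ H := by
    refine pi_mem_of_mulSingle_mem (H := H.comap inl) f fun δ => ?_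
    obtain ⟨r, hr, σ, rfl⟩ := hR δ
    rw [mem_comap, ← wreathMulAut_mulSingle, inl_aut]
    exact mul_mem (mul_mem (hP σ) (hR' hr _)) (hP σ⁻¹)
  exact (eq_top_iff' H).mpr fun x => inl_left_mul_inr_right x ▸ mul_mem (hbase _) (hP _)

theorem rank_le [Finite Q] [Finite Δ] [Finite P] :
    Group.rank (WreathProduct Q Δ P) ≤
      Group.rank P + Nat.card (orbitRel.Quotient P Δ) * Group.rank Q := by
  classical
  have := Fintype.ofFinite (orbitRel.Quotient P Δ)
  obtain ⟨S, hS, hSgen⟩ := Group.rank_spec P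
  obtain ⟨T, hT, hTgen⟩ := Group.rank_spec Q
  set R : Finset Δ := Finset.univ.image (Quotient.out : orbitRel.Quotient P Δ → Δ)
  have hR (δ : Δ) : ∃ r ∈ R, δ ∈ orbit P r :=
    ⟨_, Finset.mem_image_of_mem _ (Finset.mem_univ ⟦δ⟧),
      orbitRel_apply.mp (Quotient.exact (Quotient.out_eq _).symm)⟩
  calc Group.rank (WreathProduct Q Δ P)
      ≤ (S.image inr ∪ Finset.image₂ (fun r q => inl (Pi.mulSingle r q)) R T).card :=
        Group.rank_le (by push_cast; exact closure_eq_top hSgen hTgen hR)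
    _ ≤ S.card + R.card * T.card :=
        (Finset.card_union_le _ _).trans
          (add_le_add Finset.card_image_le (Finset.card_image₂_le _ _ _))
    _ ≤ Group.rank P + Nat.card (orbitRel.Quotient P Δ) * Group.rank Q := by
        rw [hS, hT, Nat.card_eq_fintype_card]
        gcongr
        exact Finset.card_image_le

section OrbitProd

variable [Fintype Δ] [DecidableEq (orbitRel.Quotient P Δ)] {A B : Type*} [CommGroup A] [Group B]

-- `x ↦ (ω ↦ ∏ δ ∈ ω, f (x δ))`
variable (Δ P) in
def orbitProd (f : Q →* A) : (Δ → Q) →* (orbitRel.Quotient P Δ → A) :=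
  MonoidHom.noncommPiCoprod (fun δ => (MonoidHom.mulSingle _ ⟦δ⟧).comp f)
    fun _ _ _ _ _ => Commute.all _ _

theorem orbitProd_mulSingle [DecidableEq Δ] (f : Q →* A) (δ : Δ) (q : Q) :
    orbitProd Δ P f (Pi.mulSingle δ q) = Pi.mulSingle ⟦δ⟧ (f q) :=
  MonoidHom.noncommPiCoprod_mulSingle _ _ _

theorem orbitProd_wreathMulAut (f : Q →* A) (σ : P) (x : Δ → Q) :
    orbitProd Δ P f (wreathMulAut Q Δ P σ x) = orbitProd Δ P f x := by
  classical
  suffices (orbitProd Δ P f).comp (wreathMulAut Q Δ P σ).toMonoidHom = orbitProd Δ P f from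
    DFunLike.congr_fun this x
  refine MonoidHom.pi_ext fun δ q => ?_
  simp [wreathMulAut_mulSingle, orbitProd_mulSingle]

theorem orbitProd_surjective {f : Q →* A} (hf : Surjective f) :
    Surjective (orbitProd Δ P f) := by
  classical
  intro v
  refine pi_mem_of_mulSingle_mem (H := (orbitProd Δ P f).range) v fun ω => ?_
  obtain ⟨q, hq⟩ := hf (v ω)
  exact ⟨Pi.mulSingle ω.out q, by rw [orbitProd_mulSingle, Quotient.out_eq, hq]⟩

variable (Δ) in
def liftOrbitProd (f : Q →* A) (g : P →* B) :
    WreathProduct Q Δ P →* (orbitRel.Quotient P Δ → A) × B :=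
  lift ((MonoidHom.inl _ _).comp (orbitProd Δ P f)) ((MonoidHom.inr _ _).comp g) fun σ => by
    ext x <;> simp [orbitProd_wreathMulAut]

theorem liftOrbitProd_surjective {f : Q →* A} {g : P →* B} (hf : Surjective f)
    (hg : Surjective g) : Surjective (liftOrbitProd Δ f g) := by
  rintro ⟨v, b⟩
  obtain ⟨x, rfl⟩ := orbitProd_surjective hf v
  obtain ⟨σ, rfl⟩ := hg b
  exact ⟨inl x * inr σ, by simp [liftOrbitProd]⟩

end OrbitProd

theorem le_rank {p : ℕ} (hp : p.Prime) [Finite Q] [Finite Δ] [Finite P] (hQ : IsPGroup p Q)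
    (hP : IsPGroup p P) :
    Group.rank P + Nat.card (orbitRel.Quotient P Δ) * Group.rank Q ≤
      Group.rank (WreathProduct Q Δ P) := by
  classical
  have := Fintype.ofFinite Δ
  let V := (orbitRel.Quotient P Δ → Q ⧸ commutatorPow p Q) × (P ⧸ commutatorPow p P)
  have hV (v : V) : v ^ p = 1 :=
    Prod.ext (funext fun _ => pow_eq_one_of_quotient_commutatorPow p _)
      (pow_eq_one_of_quotient_commutatorPow p _)
  have hcard : p ^ Group.rank V =
      p ^ (Group.rank P + Nat.card (orbitRel.Quotient P Δ) * Group.rank Q) := by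
    rw [← card_eq_pow_rank_of_pow_eq_one hp hV, Nat.card_prod, Nat.card_fun,
      hQ.card_quotient_commutatorPow hp, hP.card_quotient_commutatorPow hp]
    ring
  calc _ = Group.rank V := (Nat.pow_right_injective hp.two_le hcard).symm
    _ ≤ Group.rank (WreathProduct Q Δ P) := Group.rank_le_of_surjective _
      (liftOrbitProd_surjective (QuotientGroup.mk'_surjective _) (QuotientGroup.mk'_surjective _))

end WreathProduct

end Wreath

theorem rank_wreathProduct_general (p : ℕ) (hp : p.Prime) (Q Δ P : Type*) [Group Q] [Group P]
    [Finite Q] [Finite Δ] [Finite P] [MulAction P Δ]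
    (hQ : IsPGroup p Q) (hP : IsPGroup p P) :
    Group.rank (WreathProduct Q Δ P) =
      Group.rank P + Nat.card (MulAction.orbitRel.Quotient P Δ) * Group.rank Q :=
  WreathProduct.rank_le.antisymm (WreathProduct.le_rank hp hQ hP)

/-- If `Q` is a finite `p`-group and `P` is a finite `p`-group acting faithfully on a
finite set `Δ` with `ℓ` orbits, then `d(Q wr_Δ P) = d(P) + ℓ·d(Q)`. -/
theorem rank_wreathProduct (p : ℕ) (hp : p.Prime) (Q Δ P : Type*) [Group Q] [Group P]
    [Finite Q] [Finite Δ] [Finite P] [MulAction P Δ] [FaithfulSMul P Δ]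
    (hQ : IsPGroup p Q) (hP : IsPGroup p P) :
    Group.rank (WreathProduct Q Δ P) =
      Group.rank P + Nat.card (MulAction.orbitRel.Quotient P Δ) * Group.rank Q :=
  rank_wreathProduct_general p hp Q Δ P hQ hP
end

section
/- For all positive integers x and y and every real number η ≥ 2, x^η + y^η + x + y ≤ (x + y)^η. -/
open scoped NNReal


lemma real_add_rpow_le_rpow_add {a b p : ℝ} (ha : 0 ≤ a) (hb : 0 ≤ b)
    (hp : 1 ≤ p) : a ^ p + b ^ p ≤ (a + b) ^ p := by
  have h := NNReal.add_rpow_le_rpow_add a.toNNReal b.toNNReal hp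
  have h' : ((a.toNNReal ^ p + b.toNNReal ^ p : ℝ≥0) : ℝ)
      ≤ (((a.toNNReal + b.toNNReal) ^ p : ℝ≥0) : ℝ) := NNReal.coe_le_coe.2 h
  simpa [NNReal.coe_rpow, Real.coe_toNNReal a ha, Real.coe_toNNReal b hb,
    ← Real.toNNReal_add ha hb, Real.coe_toNNReal _ (by linarith : (0:ℝ) ≤ a + b)] using h'

/-- For positive integers `x, y` and any real `η ≥ 2`,
`x^η + y^η + x + y ≤ (x + y)^η` (real powers). -/
theorem rpow_add_rpow_add_le (x y : ℕ) (hx : 1 ≤ x) (hy : 1 ≤ y)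
    (η : ℝ) (hη : 2 ≤ η) :
    (x : ℝ) ^ η + (y : ℝ) ^ η + x + y ≤ ((x : ℝ) + y) ^ η := by
  have hx' : (1:ℝ) ≤ x := by exact_mod_cast hx
  have hy' : (1:ℝ) ≤ y := by exact_mod_cast hy
  have hxp : (0:ℝ) < x := by linarith
  have hyp : (0:ℝ) < y := by linarith
  have hsp : (0:ℝ) < (x:ℝ) + y := by linarith
  have hp : (1:ℝ) ≤ η - 1 := by linarith
  have hkey : ∀ a : ℝ, 1 ≤ a → a + 1 ≤ (x:ℝ) + y →
      a ^ (η-1) + 1 ≤ ((x:ℝ)+y) ^ (η-1) := by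
    intro a ha hle
    calc a ^ (η-1) + 1 = a ^ (η-1) + (1:ℝ) ^ (η-1) := by rw [Real.one_rpow]
    _ ≤ (a + 1) ^ (η-1) := real_add_rpow_le_rpow_add (by linarith) zero_le_one hp
    _ ≤ ((x:ℝ)+y) ^ (η-1) := Real.rpow_le_rpow (by linarith) hle (by linarith)
  have hkx := hkey (x:ℝ) hx' (by linarith)
  have hky := hkey (y:ℝ) hy' (by linarith)
  have hsplit : ∀ a : ℝ, 0 < a → a ^ η = a * a ^ (η-1) := by
    intro a ha
    have h := Real.rpow_add ha 1 (η-1)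
    rw [Real.rpow_one] at h
    rw [← h]
    ring_nf
  have h1 : (x:ℝ) * ((x:ℝ) ^ (η-1) + 1) ≤ (x:ℝ) * ((x:ℝ)+y) ^ (η-1) :=
    mul_le_mul_of_nonneg_left hkx hxp.le
  have h2 : (y:ℝ) * ((y:ℝ) ^ (η-1) + 1) ≤ (y:ℝ) * ((x:ℝ)+y) ^ (η-1) :=
    mul_le_mul_of_nonneg_left hky hyp.le
  have ex := hsplit (x:ℝ) hxp
  have ey := hsplit (y:ℝ) hyp
  have es := hsplit ((x:ℝ)+y) hsp
  nlinarith [h1, h2, ex, ey, es]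
end

section
/- For every integer n ≥ 2, ∑_{i=1}^{⌊√n⌋} (n/i)/log(n/i) ≥ n·log 2, where log is the natural logarithm. -/
/-!
Write `f x = (n / x) / log (n / x)` and `s = ⌊√n⌋`. Since `u ↦ u / log u` increases for `u ≥ e`,
`f` decreases on `[1, s + 1]` once `n / (s + 1) ≥ e`, which holds for `s ≥ 4`; then the sum
dominates `∫₁^{s+1} f = n (log log n - log log (n / (s + 1)))`, and `(n / (s + 1))² ≤ n` makes this
at least `n log 2`. For `s ≤ 3` (so `n ≤ 15`) each term is bounded below by `log (n / i) ≤ k log 2`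
with `n ≤ i 2ᵏ`, and the resulting sums beat `n log 2` because `(log 2)² < 1/2`.
-/

open Real Finset

lemma monotoneOn_div_log : MonotoneOn (fun u : ℝ ↦ u / log u) (Set.Ici (exp 1)) := by
  intro u hu v hv huv
  have hv_pos : 0 < log v / v :=
    div_pos (log_pos ((one_lt_exp_iff.2 one_pos).trans_le hv)) ((exp_pos 1).trans_le hv)
  simpa only [inv_div] using inv_anti₀ hv_pos (log_div_self_antitoneOn hu hv huv)

lemma antitoneOn_div_log_div (c : ℝ) :
    AntitoneOn (fun x ↦ (c / x) / log (c / x)) (Set.Ioc 0 (c / exp 1)) := by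
  have hmem {x : ℝ} (hx : x ∈ Set.Ioc 0 (c / exp 1)) : exp 1 ≤ c / x := by
    rw [le_div_iff₀ hx.1, mul_comm, ← le_div_iff₀ (exp_pos 1)]
    exact hx.2
  intro x hx y hy hxy
  have hc : 0 < c := (div_pos_iff_of_pos_right (exp_pos 1)).1 (hy.1.trans_le hy.2)
  exact monotoneOn_div_log (hmem hy) (hmem hx) (div_le_div_of_nonneg_left hc.le hx.1 hxy)

lemma hasDerivAt_neg_mul_log_log_div {c x : ℝ} (h : 1 < c / x) :
    HasDerivAt (fun y ↦ -(c * log (log (c / y)))) ((c / x) / log (c / x)) x := by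
  have hx : x ≠ 0 := by rintro rfl; norm_num at h
  have hdiv : HasDerivAt (fun y ↦ c / y) (-c / x ^ 2) x := by
    simpa [div_eq_mul_inv, neg_div] using (hasDerivAt_inv hx).const_mul c
  have hlog := (hdiv.log (zero_lt_one.trans h).ne').log (log_pos h).ne'
  refine (hlog.const_mul c).neg.congr_deriv ?_
  field_simp

lemma integral_div_log_div {c a b : ℝ} (ha : 0 < a) (hab : a ≤ b) (hb : 1 < c / b) :
    ∫ x in a..b, (c / x) / log (c / x) = c * (log (log (c / a)) - log (log (c / b))) := by
  have hc : 0 < c := (div_pos_iff_of_pos_right (ha.trans_le hab)).1 (zero_lt_one.trans hb)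
  have hgt {x : ℝ} (hx : x ∈ Set.uIcc a b) : 1 < c / x := by
    rw [Set.uIcc_of_le hab] at hx
    exact hb.trans_le (div_le_div_of_nonneg_left hc.le (ha.trans_le hx.1) hx.2)
  rw [intervalIntegral.integral_eq_sub_of_hasDerivAt
    (fun x hx ↦ hasDerivAt_neg_mul_log_log_div (hgt hx))]
  · ring
  · refine ContinuousOn.intervalIntegrable fun x hx ↦ ContinuousAt.continuousWithinAt ?_
    have hx0 : x ≠ 0 := by rintro rfl; have := hgt hx; norm_num at this
    have hdiv : ContinuousAt (fun y ↦ c / y) x := continuousAt_const.div continuousAt_id hx0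
    exact hdiv.div (hdiv.log (zero_lt_one.trans (hgt hx)).ne') (log_pos (hgt hx)).ne'

lemma log_two_le_log_log_sub_log_log {x y : ℝ} (hy : 1 < y) (hyx : y ^ 2 ≤ x) :
    log 2 ≤ log (log x) - log (log y) := by
  have hlogy : 0 < log y := log_pos hy
  have hlogx : 2 * log y ≤ log x := by
    simpa only [log_pow, Nat.cast_ofNat] using log_le_log (by positivity) hyx
  rw [← log_div (by linarith) hlogy.ne']
  exact log_le_log two_pos ((le_div_iff₀ hlogy).2 hlogx)

lemma sum_range_eq_sum_Icc (f : ℝ → ℝ) (s : ℕ) :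
    ∑ i ∈ range s, f (1 + i) = ∑ i ∈ Icc 1 s, f i := by
  rw [← Finset.Ico_add_one_right_eq_Icc, sum_Ico_eq_sum_range, Nat.add_sub_cancel]
  push_cast
  rfl

lemma mul_log_two_le_sum_div_log_of_four_le {n s : ℕ} (hs : 4 ≤ s) (hsn : s ^ 2 ≤ n)
    (hns : n < (s + 1) ^ 2) :
    (n : ℝ) * log 2 ≤ ∑ i ∈ Icc 1 s, ((n : ℝ) / i) / log ((n : ℝ) / i) := by
  have hs' : (4 : ℝ) ≤ s := by exact_mod_cast hs
  have hsn' : (s : ℝ) ^ 2 ≤ n := by exact_mod_cast hsn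
  have hns' : (n : ℝ) < (s + 1) ^ 2 := by exact_mod_cast hns
  have he : exp 1 * (1 + s) ≤ n := by nlinarith [exp_one_lt_d9]
  have hgt : 1 < (n : ℝ) / (1 + s) := by
    rw [one_lt_div (by positivity)]; nlinarith [exp_one_gt_d9]
  have hanti : AntitoneOn (fun x ↦ ((n : ℝ) / x) / log ((n : ℝ) / x)) (Set.Icc 1 (1 + s)) :=
    (antitoneOn_div_log_div n).mono fun x hx ↦
      ⟨one_pos.trans_le hx.1, (le_div_iff₀ (exp_pos 1)).2 (by nlinarith [hx.2, exp_pos 1])⟩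
  calc (n : ℝ) * log 2
      ≤ n * (log (log (n / 1)) - log (log (n / (1 + s)))) := by
        refine mul_le_mul_of_nonneg_left (log_two_le_log_log_sub_log_log hgt ?_) n.cast_nonneg
        rw [div_one, div_pow, div_le_iff₀ (by positivity)]
        nlinarith
    _ = ∫ x in (1 : ℝ)..1 + s, ((n : ℝ) / x) / log ((n : ℝ) / x) :=
        (integral_div_log_div one_pos (by linarith) hgt).symm
    _ ≤ ∑ i ∈ range s, ((n : ℝ) / (1 + i)) / log ((n : ℝ) / (1 + i)) := hanti.integral_le_sum
    _ = ∑ i ∈ Icc 1 s, ((n : ℝ) / i) / log ((n : ℝ) / i) :=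
        sum_range_eq_sum_Icc (fun x ↦ ((n : ℝ) / x) / log ((n : ℝ) / x)) s

lemma div_mul_log_two_le_div_log {x : ℝ} {k : ℕ} (hx : 1 < x) (hxk : x ≤ 2 ^ k) :
    x / (k * log 2) ≤ x / log x := by
  refine div_le_div_of_nonneg_left (by linarith) (log_pos hx) ?_
  simpa only [log_pow] using log_le_log (by linarith) hxk

lemma log_two_sq_lt_half : log 2 ^ 2 < 1 / 2 := by
  nlinarith [log_two_lt_d9, log_pos one_lt_two]

lemma mul_log_two_le_sum_div_log_of_le_three {n s : ℕ} (hn : 2 ≤ n) (hs : s ≤ 3)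
    (hsn : s ^ 2 ≤ n) (hns : n < (s + 1) ^ 2) :
    (n : ℝ) * log 2 ≤ ∑ i ∈ Icc 1 s, ((n : ℝ) / i) / log ((n : ℝ) / i) := by
  have hterm (i k : ℕ) (hi : i < n) (hk : n ≤ i * 2 ^ k) :
      ((n : ℝ) / i) / (k * log 2) ≤ ((n : ℝ) / i) / log ((n : ℝ) / i) := by
    have hi0 : (0 : ℝ) < i := by exact_mod_cast Nat.pos_of_ne_zero (by rintro rfl; omega)
    refine div_mul_log_two_le_div_log ((one_lt_div hi0).2 (by exact_mod_cast hi))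
      ((div_le_iff₀ hi0).2 ?_)
    rw [mul_comm]; exact_mod_cast hk
  have hscale {c : ℝ} (hc : 1 / 2 ≤ c) : (n : ℝ) * log 2 ≤ n * c / log 2 := by
    rw [le_div_iff₀ (log_pos one_lt_two), mul_assoc]
    exact mul_le_mul_of_nonneg_left (by nlinarith [log_two_sq_lt_half]) n.cast_nonneg
  interval_cases s
  · omega
  · have h1 := hterm 1 2 (by omega) (by omega)
    simp only [Icc_self, sum_singleton]
    calc (n : ℝ) * log 2 ≤ n * (1 / 2) / log 2 := hscale le_rfl
      _ = (n / (1 : ℕ)) / ((2 : ℕ) * log 2) := by push_cast; ring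
      _ ≤ _ := h1
  · have h1 := hterm 1 3 (by omega) (by omega)
    have h2 := hterm 2 2 (by omega) (by omega)
    rw [sum_Icc_succ_top (by norm_num), Icc_self, sum_singleton]
    calc (n : ℝ) * log 2 ≤ n * (1 / 3 + 1 / 4) / log 2 := hscale (by norm_num)
      _ = (n / (1 : ℕ)) / ((3 : ℕ) * log 2) + (n / (2 : ℕ)) / ((2 : ℕ) * log 2) := by
        push_cast; ring
      _ ≤ _ := add_le_add h1 h2
  · have h1 := hterm 1 4 (by omega) (by omega)
    have h2 := hterm 2 3 (by omega) (by omega)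
    have h3 := hterm 3 3 (by omega) (by omega)
    rw [sum_Icc_succ_top (by norm_num), sum_Icc_succ_top (by norm_num), Icc_self,
      sum_singleton]
    calc (n : ℝ) * log 2 ≤ n * (1 / 4 + 1 / 6 + 1 / 9) / log 2 := hscale (by norm_num)
      _ = (n / (1 : ℕ)) / ((4 : ℕ) * log 2) + (n / (2 : ℕ)) / ((3 : ℕ) * log 2)
          + (n / (3 : ℕ)) / ((3 : ℕ) * log 2) := by
        push_cast; ring
      _ ≤ _ := add_le_add (add_le_add h1 h2) h3

/-- For every `n ≥ 2`, `∑_{i=1}^{⌊√n⌋} (n/i)/log(n/i) ≥ n·log 2`. -/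
theorem sum_div_log_ge (n : ℕ) (hn : 2 ≤ n) :
    (n : ℝ) * Real.log 2 ≤
      ∑ i ∈ Finset.Icc 1 (Nat.sqrt n), ((n : ℝ) / i) / Real.log ((n : ℝ) / i) := by
  rcases le_or_gt (Nat.sqrt n) 3 with hs | hs
  · exact mul_log_two_le_sum_div_log_of_le_three hn hs (Nat.sqrt_le' n) (Nat.lt_succ_sqrt' n)
  · exact mul_log_two_le_sum_div_log_of_four_le hs (Nat.sqrt_le' n) (Nat.lt_succ_sqrt' n)
end
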